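/- Krylov exactness: let A be an n×n matrix, v ≠ 0, and suppose the Krylov subspace K_m(A, v) = span{v, Av, …, A^{m−1}v} is invariant under A (i.e., A K_m ⊆ K_m). If V_m is an orthonormal basis matrix of K_m with first column v/‖v‖ and H_m = V_mᵀ A V_m, then exp(A)v = ‖v‖ · V_m exp(H_m) e₁. -/

import Mathlib

/-!
If `A` maps the column space of `V` into itself and `Vᵀ V = 1`, then `A V = V H` with
`H = Vᵀ A V`. Hence `Aᵏ V = V Hᵏ` for every `k`, and summing the exponential series gives
`exp A * V = V * exp H`; apply it to `e₁`, as `v = ‖v‖ V e₁`.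
-/

open NormedSpace

namespace Matrix

variable {m n R 𝕂 : Type*} [Fintype m] [Fintype n] [DecidableEq n]

theorem exists_mul_eq_mul_of_forall_mulVec [Semiring R] {A : Matrix m m R}
    {V : Matrix m n R} (h : ∀ x, ∃ c, A *ᵥ (V *ᵥ x) = V *ᵥ c) :
    ∃ C : Matrix n n R, A * V = V * C := by
  choose c hc using h
  refine ⟨of fun i j => c (Pi.single j 1) i, ext_of_mulVec_single fun j => ?_⟩
  rw [← mulVec_mulVec, ← mulVec_mulVec, hc, mulVec_single_one]
  rfl

theorem mul_eq_mul_mul_mul_of_mul_eq_one [Semiring R] {A : Matrix m m R} {V : Matrix m n R}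
    {W : Matrix n m R} {C : Matrix n n R} (hW : W * V = 1) (hC : A * V = V * C) :
    A * V = V * (W * A * V) := by
  rw [Matrix.mul_assoc W, hC, ← Matrix.mul_assoc W, hW, Matrix.one_mul]

variable [DecidableEq m]

theorem pow_mul_eq_mul_pow_of_mul_eq_mul [Semiring R] {A : Matrix m m R} {H : Matrix n n R}
    {V : Matrix m n R} (h : A * V = V * H) (k : ℕ) :
    A ^ k * V = V * H ^ k := by
  induction k with
  | zero => simp
  | succ k ih =>
    rw [pow_succ, pow_succ, Matrix.mul_assoc, h, ← Matrix.mul_assoc, ih, Matrix.mul_assoc]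

-- Matrices carry no global norm; any norm makes the exponential series converge.
open scoped Norms.Operator in
theorem exp_mul_eq_mul_exp_of_mul_eq_mul [RCLike 𝕂] {A : Matrix m m 𝕂} {H : Matrix n n 𝕂}
    {V : Matrix m n 𝕂} (h : A * V = V * H) :
    exp A * V = V * exp H := by
  have hA : HasSum (fun k => ((k.factorial : 𝕂)⁻¹ • A ^ k) * V) (exp A * V) :=
    (exp_series_hasSum_exp' A).map (mulRightLinearMap m 𝕂 V)
      (continuous_id.matrix_mul continuous_const)
  have hH : HasSum (fun k => V * ((k.factorial : 𝕂)⁻¹ • H ^ k)) (V * exp H) :=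
    (exp_series_hasSum_exp' H).map (mulLeftLinearMap n 𝕂 V)
      (continuous_const.matrix_mul continuous_id)
  refine hA.unique ?_
  simp_rw [Matrix.smul_mul, pow_mul_eq_mul_pow_of_mul_eq_mul h, ← Matrix.mul_smul]
  exact hH

end Matrix

theorem stmt_14_general (n m : ℕ) (A : Matrix (Fin n) (Fin n) ℝ) (v : Fin n → ℝ)
    (hv : v ≠ 0)
    (V : Matrix (Fin n) (Fin (m + 1)) ℝ)
    (horth : V.transpose * V = 1)
    (hfirst : ∀ i, V i 0 = v i / Real.sqrt (∑ i, v i ^ 2))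
    (hinv : ∀ x : Fin (m + 1) → ℝ, ∃ c : Fin (m + 1) → ℝ,
        A.mulVec (V.mulVec x) = V.mulVec c) :
    (NormedSpace.exp A).mulVec v
      = Real.sqrt (∑ i, v i ^ 2) •
          V.mulVec ((NormedSpace.exp (V.transpose * A * V)).mulVec (Pi.single 0 1)) := by
  set s := Real.sqrt (∑ i, v i ^ 2)
  have hs : s ≠ 0 := by
    obtain ⟨i, hi⟩ := Function.ne_iff.1 hv
    refine (Real.sqrt_pos.2 (Finset.sum_pos' (fun j _ => sq_nonneg (v j)) ?_)).ne'
    exact ⟨i, Finset.mem_univ i, pow_two_pos_of_ne_zero hi⟩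
  have hv_eq : v = s • V.mulVec (Pi.single 0 1) := by
    ext i
    simp [hfirst, mul_div_cancel₀ _ hs]
  obtain ⟨C, hC⟩ := Matrix.exists_mul_eq_mul_of_forall_mulVec hinv
  have hAV := Matrix.mul_eq_mul_mul_mul_of_mul_eq_one horth hC
  rw [hv_eq, Matrix.mulVec_smul, Matrix.mulVec_mulVec,
    Matrix.exp_mul_eq_mul_exp_of_mul_eq_mul hAV, ← Matrix.mulVec_mulVec]

theorem stmt_14 (n m : ℕ) (A : Matrix (Fin n) (Fin n) ℝ) (v : Fin n → ℝ)
    (hv : v ≠ 0)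
    (V : Matrix (Fin n) (Fin (m + 1)) ℝ)
    (horth : V.transpose * V = 1)
    (hspan : Submodule.span ℝ (Set.range fun j => fun i => V i j)
        = Submodule.span ℝ ((fun k : Fin (m + 1) => (A ^ (k : ℕ)).mulVec v) '' Set.univ))
    (hfirst : ∀ i, V i 0 = v i / Real.sqrt (∑ i, v i ^ 2))
    (hinv : ∀ x : Fin (m + 1) → ℝ, ∃ c : Fin (m + 1) → ℝ,
        A.mulVec (V.mulVec x) = V.mulVec c) :
    (NormedSpace.exp A).mulVec v
      = Real.sqrt (∑ i, v i ^ 2) •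
          V.mulVec ((NormedSpace.exp (V.transpose * A * V)).mulVec (Pi.single 0 1)) :=
  stmt_14_general n m A v hv V horth hfirst hinv
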